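/- Let N = 4L+1 and u_n(k) = S(3L+n+k) S(3L+n-k) for k ∈ {-2L,...,2L}. Then u_n(k) = N·2^{L+n} ∏_{j=L-n+1}^{2L} (cos(2πk/N) - cos(2πj/N)) for all -L ≤ n ≤ L and k ∈ {-2L,...,2L}. -/

import Mathlib

open scoped Real BigOperators

/-- `S N k = ∏_{j=1}^{k} 2 sin(π j / N)`, with `S N 0 = 1` (empty product);
note `S N k = 0` for `k ≥ N`. -/
noncomputable def S (N : ℕ) (k : ℕ) : ℝ :=
  ∏ j ∈ Finset.Icc 1 k, 2 * Real.sin (Real.pi * j / N)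

/-- The index set `I_N = {-M+1, ..., -M+N}` with `M = ⌊(N+1)/2⌋`.
For `N = 4L+1` this is `{-2L, ..., 2L}`. -/
noncomputable def Iset (N : ℕ) : Finset ℤ :=
  Finset.Icc (1 - (((N + 1) / 2 : ℕ) : ℤ)) ((N : ℤ) - (((N + 1) / 2 : ℕ) : ℤ))

/-- The centered discrete Fourier transform. -/
noncomputable def dft (N : ℕ) (u : ℤ → ℂ) (l : ℤ) : ℂ :=
  (Real.sqrt N : ℂ)⁻¹ *
    ∑ k ∈ Iset N, Complex.exp (-2 * Real.pi * Complex.I * k * l / N) * u k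

/-- The even vectors `u_n(k) = S(3L+n+k) S(3L+n-k)` (for `N = 4L+1`). -/
noncomputable def uvec (L : ℕ) (n k : ℤ) : ℝ :=
  S (4 * L + 1) (3 * L + n + k).toNat * S (4 * L + 1) (3 * L + n - k).toNat

/-- The odd vectors `v_n(k) = sin(2πk/N) S(3L+n+k) S(3L+n-k)` (for `N = 4L+1`). -/
noncomputable def vvec (L : ℕ) (n k : ℤ) : ℝ :=
  Real.sin (2 * Real.pi * k / (4 * L + 1)) * uvec L n k

/-!
Induction on `n`, starting at `n = -L`. There the two indices of `u_n(k)` add up to `N - 1`, and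
reflecting `j ↦ N - j` gives `S(a) S(N-1-a) = S(N-1) = ∏_{0<j<N} |1 - ζ^j| = N` for a primitive
`N`-th root of unity `ζ`. Raising `n` by one multiplies `u_n(k)` by
`2 sin(π(3L+n+1+k)/N) · 2 sin(π(3L+n+1-k)/N) = 2 (cos(2πk/N) - cos(2π(L-n)/N))`,
which is the new factor `j = L - n` of the product.
-/

open Finset Real

lemma two_mul_sin_add_mul_two_mul_sin_sub (x y : ℝ) :
    2 * sin (x + y) * (2 * sin (x - y)) = 2 * (cos (2 * y) - cos (2 * x)) := by
  rw [cos_sub_cos, show (2 * y + 2 * x) / 2 = x + y by ring,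
    show (2 * y - 2 * x) / 2 = -(x - y) by ring, sin_neg]
  ring

lemma S_succ (N a : ℕ) : S N (a + 1) = S N a * (2 * sin (π * (a + 1) / N)) := by
  rw [S, S, prod_Icc_succ_top (by omega)]
  push_cast
  rfl

lemma S_toNat_add_one (N : ℕ) {a : ℤ} (ha : 0 ≤ a) :
    S N (a + 1).toNat = S N a.toNat * (2 * sin (π * (a + 1) / N)) := by
  have hcast : ((a.toNat : ℕ) : ℝ) = a := by exact_mod_cast Int.toNat_of_nonneg ha
  rw [show a + 1 = a + (1 : ℕ) from rfl, Int.toNat_add_nat ha 1, S_succ, hcast]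

lemma prod_range_two_mul_sin_pi_mul_div (n : ℕ) :
    ∏ k ∈ range n, 2 * sin (π * (k + 1) / (n + 1)) = n + 1 := by
  set ζ : ℂ := Complex.exp (2 * π * Complex.I / (n + 1))
  have hζ : IsPrimitiveRoot ζ (n + 1) := by
    simpa using Complex.isPrimitiveRoot_exp (n + 1) n.succ_ne_zero
  have hnorm : ∀ k ∈ range n, ‖1 - ζ ^ (k + 1)‖ = 2 * sin (π * (k + 1) / (n + 1)) := by
    intro k hk
    have hkn : (k : ℝ) + 1 ≤ n + 1 := by exact_mod_cast Nat.succ_le_succ (mem_range.1 hk).le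
    have hθ : ζ ^ (k + 1) = Complex.exp (Complex.I * ((2 * π * (k + 1) / (n + 1) : ℝ) : ℂ)) := by
      rw [← Complex.exp_nat_mul]
      push_cast
      ring_nf
    rw [norm_sub_rev, hθ, Complex.norm_exp_I_mul_ofReal_sub_one, Real.norm_eq_abs, abs_of_nonneg]
    · ring_nf
    · refine mul_nonneg zero_le_two (sin_nonneg_of_nonneg_of_le_pi (by positivity) ?_)
      rw [div_div, div_le_iff₀ (by positivity)]
      nlinarith [pi_pos]
  rw [← prod_congr rfl hnorm, ← norm_prod, hζ.prod_one_sub_pow_eq_order]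
  exact_mod_cast Complex.norm_natCast (n + 1)

lemma S_pred {N : ℕ} (hN : 0 < N) : S N (N - 1) = N := by
  obtain ⟨n, rfl⟩ : ∃ n, N = n + 1 := ⟨N - 1, by omega⟩
  rw [S, ← Ico_add_one_right_eq_Icc, prod_Ico_eq_prod_range]
  simpa [add_comm] using prod_range_two_mul_sin_pi_mul_div n

lemma S_mul_S_sub {N k : ℕ} (hk : k < N) : S N k * S N (N - 1 - k) = N := by
  set f : ℕ → ℝ := fun j ↦ 2 * sin (π * j / N)
  have hreflect : ∀ j ≤ N, f (N - j) = f j := by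
    intro j hj
    have hN : (N : ℝ) ≠ 0 := by exact_mod_cast (by omega : N ≠ 0)
    simp only [f, Nat.cast_sub hj, mul_sub, sub_div, mul_div_cancel_right₀ _ hN, sin_pi_sub]
  have htail : S N (N - 1 - k) = ∏ j ∈ Ioc k (N - 1), f j := by
    refine prod_nbij' (N - ·) (N - ·) ?_ ?_ ?_ ?_ ?_ <;> intro j hj <;>
      simp only [mem_Icc, mem_Ioc] at hj
    · simp only [mem_Ioc]; omega
    · simp only [mem_Icc]; omega
    · omega
    · omega
    · exact (hreflect j (by omega)).symm
  have hIoc : ∀ m, Icc 1 m = Ioc 0 m := fun m ↦ by simpa using Icc_add_one_left_eq_Ioc 0 m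
  rw [htail, ← S_pred (by omega : 0 < N), S, S, hIoc, hIoc,
    prod_Ioc_consecutive f (Nat.zero_le k) (by omega)]

lemma uvec_neg_self (L : ℕ) {k : ℤ} (hk : |k| ≤ 2 * L) : uvec L (-L) k = 4 * L + 1 := by
  have hk' := abs_le.mp hk
  set a := (3 * (L : ℤ) + -L + k).toNat
  have hb : (3 * (L : ℤ) + -L - k).toNat = 4 * L + 1 - 1 - a := by omega
  rw [uvec, hb, S_mul_S_sub (by omega)]
  push_cast
  ring

lemma uvec_add_one (L : ℕ) {n k : ℤ} (hn : -(L : ℤ) ≤ n) (hk : |k| ≤ 2 * L) :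
    uvec L (n + 1) k = uvec L n k *
      (2 * (cos (2 * π * k / (4 * L + 1)) - cos (2 * π * (L - n) / (4 * L + 1)))) := by
  have hk' := abs_le.mp hk
  have hcos : cos (2 * π * (L - n) / (4 * L + 1)) =
      cos (2 * (π * (3 * L + n + 1) / (4 * L + 1))) := by
    rw [← cos_two_pi_sub]
    congr 1
    field_simp
    ring
  rw [uvec, uvec, show 3 * (L : ℤ) + (n + 1) + k = 3 * L + n + k + 1 by ring,
    show 3 * (L : ℤ) + (n + 1) - k = 3 * L + n - k + 1 by ring,
    S_toNat_add_one _ (by omega), S_toNat_add_one _ (by omega), hcos,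
    show 2 * π * k / (4 * L + 1) = 2 * (π * k / (4 * L + 1)) by ring,
    ← two_mul_sin_add_mul_two_mul_sin_sub]
  push_cast
  ring_nf

theorem stmt9_general (L : ℕ) (n : ℤ) (hn1 : -(L : ℤ) ≤ n)
    (k : ℤ) (hk : |k| ≤ 2 * L) :
    uvec L n k = (4 * L + 1) * (2 : ℝ) ^ ((L : ℤ) + n) *
      ∏ j ∈ Finset.Icc ((L : ℤ) - n + 1) (2 * (L : ℤ)),
        (Real.cos (2 * Real.pi * k / (4 * L + 1)) -
          Real.cos (2 * Real.pi * j / (4 * L + 1))) := by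
  induction n, hn1 using Int.leInduction with
  | base =>
    rw [uvec_neg_self L hk, add_neg_cancel, zpow_zero, Icc_eq_empty (by omega), prod_empty]
    ring
  | succ n hn ih =>
    rw [uvec_add_one L hn hk, ih, ← add_assoc, zpow_add_one₀ two_ne_zero, sub_add_eq_sub_sub,
      sub_add_cancel,
      ← insert_Icc_add_one_left_eq_Icc (by omega : (L : ℤ) - n ≤ 2 * L),
      prod_insert (by simp)]
    push_cast
    ring

theorem stmt9 (L : ℕ) (hL : 1 ≤ L) (n : ℤ) (hn1 : -(L : ℤ) ≤ n) (hn2 : n ≤ L)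
    (k : ℤ) (hk : |k| ≤ 2 * L) :
    uvec L n k = (4 * L + 1) * (2 : ℝ) ^ ((L : ℤ) + n) *
      ∏ j ∈ Finset.Icc ((L : ℤ) - n + 1) (2 * (L : ℤ)),
        (Real.cos (2 * Real.pi * k / (4 * L + 1)) -
          Real.cos (2 * Real.pi * j / (4 * L + 1))) :=
  stmt9_general L n hn1 k hk
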